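/- Characterization of Nash equilibria realizing a centralized optimum (Theorem 2(b)): suppose each u_i is differentiable, a* is a feasible action profile maximizing Σ_{i∈N} u_i((a_j)_{j∈R_i}) over feasible profiles, l*_{ij} (i ∈ N, j ∈ R_i) are supporting personalized prices (i.e. Σ_{k∈C_j} l*_{kj} = 0 for all j and, for each i, (a*_j)_{j∈R_i} maximizes ā ↦ −Σ_{j∈R_i} l*_{ij}·ā_j + u_i(ā) over ā with ā_i ∈ A_i), and set t*_i := Σ_{j∈R_i} l*_{ij}·a*_j. Then: (1) there exists at least one Nash equilibrium m* of the game induced by the mechanism and the users' payoffs with â_j(m*) = a*_j for all j ∈ N and t̂_i(m*) = t*_i for all i ∈ N; (2) a message profile m* = ((a^{i*}, π^{i*}))_{i∈N} is such a Nash equilibrium (i.e. a NE with â(m*) = a* and t̂(m*) = t*) if and only if it satisfies: (i) (1/|C_j|)·Σ_{k∈C_j} a^{k*}_j = a*_j for all j ∈ N; (ii) π^{σ_j(i)*}_j − π^{σ_j(σ_j(i))*}_j = l*_{ij} for all i ∈ N, j ∈ R_i; (iii) π^{i*}_j·(a^{i*}_j − a^{σ_j(i)*}_j)² = 0 for all i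 ∈ N, j ∈ R_i; (iv) π^{i*}_j ≥ 0 for all i ∈ N, j ∈ R_i. -/

import Mathlib

/-!
Fix an equilibrium realizing `a*`. Since `|C_j| ≥ 3`, user `i`'s own message affects neither its
price `l_{ij}` nor the last term of its tax, while through `a^i_j` it can move `â_j` to any value.
Withdrawing its price proposals shows that its penalties `π^i_j (a^i_j - a^{σ_j(i)}_j)²` vanish;
after that the mechanism's prices `l_{ij}(m)` support `a*` just as `l*_{ij}` do, so the first-order
conditions in the unconstrained coordinates `j ≠ i` force `l_{ij}(m) = l*_{ij}`, and the diagonal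
entries agree because both price systems sum to zero over `C_j`. Conversely, under (i)–(iv) a
deviation only adds nonnegative penalties to the `l*`-charges, and `a*` maximizes utility net of
those. Nonnegative price proposals with prescribed differences along the cycle `σ_j` exist
because the prescribed differences sum to zero.
-/

open Finset

/-- The set `C_j` of users affected by `j`: those `k` with `j ∈ R k`. -/
def affected {N : Type*} [Fintype N] [DecidableEq N] (R : N → Finset N) (j : N) : Finset N :=
  Finset.univ.filter (fun k => j ∈ R k)

/-- The action `â_j(m)` assigned to user `j` by the mechanism. -/
noncomputable def ahat {N : Type*} [Fintype N] [DecidableEq N] (R : N → Finset N)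
    (a : N → N → ℝ) (j : N) : ℝ :=
  (∑ k ∈ affected R j, a k j) / ((affected R j).card : ℝ)

/-- The personalized price `l_{ij}(m)` of user `i` for the action of `j`. -/
def price {N : Type*} (σ : N → N → N) (π : N → N → ℝ) (i j : N) : ℝ :=
  π (σ j i) j - π (σ j (σ j i)) j

/-- The tax `t̂_i(m)` of user `i`. -/
noncomputable def tax {N : Type*} [Fintype N] [DecidableEq N] (R : N → Finset N)
    (σ : N → N → N) (a π : N → N → ℝ) (i : N) : ℝ :=
  ∑ j ∈ R i,
    (price σ π i j * ahat R a j
      + π i j * (a i j - a (σ j i) j) ^ 2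
      - π (σ j i) j * (a (σ j i) j - a (σ j (σ j i)) j) ^ 2)

open Classical in
/-- User `i`'s payoff (valued in `EReal`) at the message profile `(a, π)`. -/
noncomputable def payoff {N : Type*} [Fintype N] [DecidableEq N] (R : N → Finset N)
    (σ : N → N → N) (A : N → Set ℝ) (u : ∀ i : N, (↥(R i) → ℝ) → ℝ)
    (a π : N → N → ℝ) (i : N) : EReal :=
  if ahat R a i ∈ A i then
    (((- tax R σ a π i + u i fun j => ahat R a j.1) : ℝ) : EReal)
  else ⊥

/-- `(a, π)` is a Nash equilibrium of the game induced by the mechanism and the payoffs. -/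
def IsNE {N : Type*} [Fintype N] [DecidableEq N] (R : N → Finset N)
    (σ : N → N → N) (A : N → Set ℝ) (u : ∀ i : N, (↥(R i) → ℝ) → ℝ)
    (a π : N → N → ℝ) : Prop :=
  (∀ i, ∀ j ∈ R i, 0 ≤ π i j) ∧
  ∀ (i : N) (a' π' : N → ℝ), (∀ j ∈ R i, 0 ≤ π' j) →
    payoff R σ A u (Function.update a i a') (Function.update π i π') i ≤
      payoff R σ A u a π i


section Cycle
variable {α : Type*}

theorem card_le_of_isPeriodicPt {f : α → α} {C : Finset α} {x : α} {n : ℕ}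
    (hx : Function.IsPeriodicPt f n x) (hn : 0 < n) (hC : ∀ y ∈ C, ∃ m, f^[m] x = y) :
    #C ≤ n := by
  classical
  calc #C ≤ #((range n).image fun m => f^[m] x) := by
        refine card_le_card fun y hy => ?_
        obtain ⟨m, rfl⟩ := hC y hy
        exact mem_image.2 ⟨m % n, mem_range.2 (Nat.mod_lt m hn), hx.iterate_mod_apply m⟩
    _ ≤ n := card_image_le.trans (card_range n).le

theorem apply_ne_self_of_cycle {f : α → α} {C : Finset α} (hC : 3 ≤ #C)
    (hcyc : ∀ x ∈ C, ∀ y ∈ C, ∃ n, f^[n] x = y) {x : α} (hx : x ∈ C) :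
    f x ≠ x ∧ f (f x) ≠ x := by
  constructor
  · intro h
    have := card_le_of_isPeriodicPt (n := 1) h one_pos (hcyc x hx)
    omega
  · intro h
    have := card_le_of_isPeriodicPt (n := 2) h two_pos (hcyc x hx)
    omega

theorem exists_apply_sub_apply_apply_eq {g : α → α} [Fintype α] (hg : g.Bijective)
    (hcyc : ∀ x y, ∃ n, g^[n] x = y) {l : α → ℝ} (hl : ∑ x, l x = 0) :
    ∃ p : α → ℝ, ∀ x, p (g x) - p (g (g x)) = l x := by
  rcases isEmpty_or_nonempty α with hα | ⟨⟨x₀⟩⟩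
  · exact ⟨0, isEmptyElim⟩
  -- `T` kills exactly the constants since `g` is one cycle, so by rank–nullity its range is the
  -- whole hyperplane `ker S` of zero-sum functions.
  let T : (α → ℝ) →ₗ[ℝ] α → ℝ := LinearMap.funLeft ℝ ℝ g - LinearMap.funLeft ℝ ℝ (g ∘ g)
  let S : (α → ℝ) →ₗ[ℝ] ℝ := ∑ x, LinearMap.proj x
  have hS : ∀ p, S p = ∑ x, p x := fun p => by simp [S]
  have hrange : LinearMap.range T ≤ LinearMap.ker S := by
    rintro _ ⟨p, rfl⟩
    simp [hS, T, LinearMap.funLeft, sum_sub_distrib, hg.sum_comp fun x => p (g x),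
      hg.sum_comp p]
  have hker : LinearMap.ker T ≤ ℝ ∙ (fun _ => 1) := by
    intro p hp
    have hinv : ∀ y, p (g y) = p y := by
      intro y
      obtain ⟨x, rfl⟩ := hg.2 y
      exact (sub_eq_zero.1 (congrFun hp x : p (g x) - p (g (g x)) = 0)).symm
    have hconst : ∀ y, p y = p x₀ := by
      intro y
      obtain ⟨n, rfl⟩ := hcyc x₀ y
      induction n with
      | zero => rfl
      | succ n ih => rw [Function.iterate_succ_apply', hinv, ih]
    exact Submodule.mem_span_singleton.2 ⟨p x₀, funext fun y => by simp [hconst y]⟩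
  have hSne : LinearMap.ker S ≠ ⊤ := fun h => by
    have := LinearMap.mem_ker.1 (h ▸ Submodule.mem_top : (fun _ => (1 : ℝ)) ∈ LinearMap.ker S)
    simp only [hS, sum_const, card_univ, nsmul_eq_mul, mul_one, Nat.cast_eq_zero] at this
    exact (Fintype.card_pos_iff.2 ⟨x₀⟩).ne' this
  have hdim := LinearMap.finrank_range_add_finrank_ker T
  have h1 := (Submodule.finrank_mono hker).trans
    (finrank_span_le_card ({fun _ => 1} : Set (α → ℝ)))
  have h2 := Submodule.finrank_lt hSne
  simp only [Set.toFinset_singleton, card_singleton, Module.finrank_fintype_fun_eq_card]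
    at h1 h2 hdim
  have heq := Submodule.eq_of_le_of_finrank_le hrange (by omega)
  obtain ⟨p, hp⟩ := heq ▸ (LinearMap.mem_ker.2 ((hS l).trans hl) : l ∈ LinearMap.ker S)
  exact ⟨p, fun x => by simpa [T, LinearMap.funLeft] using congrFun hp x⟩

theorem exists_nonneg_apply_sub_apply_apply_eq {f : α → α} {C : Finset α}
    (hf : Set.BijOn f C C) (hcyc : ∀ x ∈ C, ∀ y ∈ C, ∃ n, f^[n] x = y) {l : α → ℝ}
    (hl : ∑ x ∈ C, l x = 0) :
    ∃ p : α → ℝ, (∀ x, 0 ≤ p x) ∧ ∀ x ∈ C, p (f x) - p (f (f x)) = l x := by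
  classical
  obtain ⟨q, hq⟩ := exists_apply_sub_apply_apply_eq (l := fun x : C => l x) hf.bijective
    (fun x y => by
      obtain ⟨n, hn⟩ := hcyc x x.2 y y.2
      exact ⟨n, Subtype.ext <| (hf.mapsTo.coe_iterate_restrict x n).trans hn⟩)
    ((sum_coe_sort C l).trans hl)
  -- Shifting `q` by a constant keeps the equations and makes it nonnegative.
  let B := ∑ y, |q y|
  have hB : ∀ y, 0 ≤ q y + B := fun y =>
    neg_le_iff_add_nonneg.1 <| (neg_abs_le (q y)).trans' <|
      neg_le_neg <| single_le_sum (fun z _ => abs_nonneg (q z)) (mem_univ y)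
  refine ⟨fun x => if h : x ∈ C then q ⟨x, h⟩ + B else 0, fun x => ?_, fun x hx => ?_⟩
  · dsimp only
    split_ifs
    exacts [hB _, le_rfl]
  · have hfx : f x ∈ C := hf.mapsTo hx
    have hffx : f (f x) ∈ C := hf.mapsTo hfx
    dsimp only
    rw [dif_pos hfx, dif_pos hffx, add_sub_add_right_eq_sub]
    exact hq ⟨x, hx⟩

end Cycle

theorem Finset.eq_of_sum_eq_of_forall_ne {ι M : Type*} [AddCancelCommMonoid M] {s : Finset ι}
    {f g : ι → M} {a : ι} (ha : a ∈ s) (hsum : ∑ x ∈ s, f x = ∑ x ∈ s, g x)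
    (h : ∀ x ∈ s, x ≠ a → f x = g x) : f a = g a := by
  classical
  rw [← add_sum_erase s f ha, ← add_sum_erase s g ha,
    sum_congr rfl fun x hx => h x (mem_of_mem_erase hx) (ne_of_mem_erase hx)] at hsum
  exact add_right_cancel hsum

section FirstOrder
variable {ι : Type*} [Fintype ι] {u : (ι → ℝ) → ℝ} {p q x : ι → ℝ}

theorem dotProduct_eq_fderiv_of_isMaxOn {s : Set (ι → ℝ)} {v : ι → ℝ}
    (hu : DifferentiableAt ℝ u x) (hmax : IsMaxOn (fun y => -(p ⬝ᵥ y) + u y) s x)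
    (hline : ∀ t : ℝ, x + t • v ∈ s) :
    p ⬝ᵥ v = fderiv ℝ u x v := by
  have hφ : HasDerivAt (fun t : ℝ => -(p ⬝ᵥ x + t * p ⬝ᵥ v) + u (x + t • v))
      (-(1 * p ⬝ᵥ v) + fderiv ℝ u x v) 0 := by
    have hγ : HasDerivAt (fun t : ℝ => x + t • v) v 0 := by
      simpa using ((hasDerivAt_id (0 : ℝ)).smul_const v).const_add x
    refine (((hasDerivAt_id 0).mul_const _).const_add _).neg.add ?_
    exact (by simpa using hu.hasFDerivAt : HasFDerivAt u (fderiv ℝ u x) (x + (0 : ℝ) • v))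
      |>.comp_hasDerivAt 0 hγ
  have hloc : IsLocalMax (fun t : ℝ => -(p ⬝ᵥ x + t * p ⬝ᵥ v) + u (x + t • v)) 0 :=
    Filter.Eventually.of_forall fun t => by
      simpa [dotProduct_add, dotProduct_smul] using hmax (hline t)
  linarith [hloc.hasDerivAt_eq_zero hφ]

theorem apply_eq_of_isMaxOn_of_isMaxOn [DecidableEq ι] {A : Set ℝ} {i j : ι}
    (hu : DifferentiableAt ℝ u x) (hx : x i ∈ A)
    (hp : IsMaxOn (fun y => -(p ⬝ᵥ y) + u y) {y | y i ∈ A} x)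
    (hq : IsMaxOn (fun y => -(q ⬝ᵥ y) + u y) {y | y i ∈ A} x) (hji : j ≠ i) :
    p j = q j := by
  have hline : ∀ t : ℝ, x + t • Pi.single j 1 ∈ {y | y i ∈ A} := fun t => by
    simpa [Pi.single_apply, hji.symm] using hx
  simpa [dotProduct_single] using (dotProduct_eq_fderiv_of_isMaxOn hu hp hline).trans
    (dotProduct_eq_fderiv_of_isMaxOn hu hq hline).symm

end FirstOrder

section Mechanism
variable {N : Type*} [Fintype N] [DecidableEq N] {R : N → Finset N} {σ : N → N → N}
  {A : N → Set ℝ} {u : ∀ i : N, (↥(R i) → ℝ) → ℝ} {a π : N → N → ℝ} {i : N}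

theorem mem_affected {j k : N} : k ∈ affected R j ↔ j ∈ R k := by
  simp [affected]

theorem ahat_const (x : N → ℝ) {j : N} (hj : (affected R j).Nonempty) :
    ahat R (fun _ => x) j = x j := by
  rw [ahat, sum_const, nsmul_eq_mul, mul_div_cancel_left₀]
  exact Nat.cast_ne_zero.2 hj.card_pos.ne'

theorem ahat_update (a' : N → ℝ) {j : N} (hj : j ∈ R i) :
    ahat R (Function.update a i a') j = ahat R a j + (a' j - a i j) / #(affected R j) := by
  have hi : i ∈ affected R j := mem_affected.2 hj
  have hcol : ∀ k, Function.update a i a' k j = Function.update (fun k => a k j) i (a' j) k := by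
    intro k
    rcases eq_or_ne k i with rfl | hki
    · simp
    · simp [Function.update_of_ne hki]
  rw [ahat, ahat, sum_congr rfl fun k _ => hcol k, sum_update_of_mem hi,
    sdiff_singleton_eq_erase, sum_erase_eq_sub hi]
  ring

theorem exists_ahat_update_eq (a : N → N → ℝ) (i : N) (b : ↥(R i) → ℝ) :
    ∃ a' : N → ℝ, ∀ j : ↥(R i), ahat R (Function.update a i a') j = b j := by
  refine ⟨fun j => if h : j ∈ R i then a i j + #(affected R j) * (b ⟨j, h⟩ - ahat R a j) else 0,
    fun j => ?_⟩
  have hC : (#(affected R j) : ℝ) ≠ 0 :=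
    Nat.cast_ne_zero.2 (card_ne_zero_of_mem (mem_affected.2 j.2))
  rw [ahat_update _ j.2, dif_pos j.2]
  field_simp
  ring

theorem sum_price_eq_zero {j : N} (hσ : Set.BijOn (σ j) (affected R j) (affected R j))
    (π : N → N → ℝ) : ∑ k ∈ affected R j, price σ π k j = 0 := by
  have hperm : ∑ k ∈ affected R j, π (σ j (σ j k)) j = ∑ k ∈ affected R j, π (σ j k) j :=
    sum_nbij (σ j) hσ.mapsTo hσ.injOn hσ.surjOn fun _ _ => rfl
  simp only [price, sum_sub_distrib, hperm, sub_self]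

theorem tax_update_self (hσi : ∀ j ∈ R i, σ j i ≠ i ∧ σ j (σ j i) ≠ i) (a' π' : N → ℝ) :
    tax R σ (Function.update a i a') (Function.update π i π') i =
      ∑ j ∈ R i, (price σ π i j * ahat R (Function.update a i a') j
        + π' j * (a' j - a (σ j i) j) ^ 2
        - π (σ j i) j * (a (σ j i) j - a (σ j (σ j i)) j) ^ 2) :=
  sum_congr rfl fun j hj => by
    simp [price, Function.update_of_ne (hσi j hj).1, Function.update_of_ne (hσi j hj).2]

theorem tax_eq_sum_price (hσ : ∀ j, Set.MapsTo (σ j) (affected R j) (affected R j))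
    (hpen : ∀ k, ∀ j ∈ R k, π k j * (a k j - a (σ j k) j) ^ 2 = 0) (i : N) :
    tax R σ a π i = ∑ j ∈ R i, price σ π i j * ahat R a j :=
  sum_congr rfl fun j hj => by
    rw [hpen i j hj, hpen (σ j i) j (mem_affected.1 (hσ j (mem_affected.2 hj)))]
    ring

theorem payoff_of_mem (h : ahat R a i ∈ A i) :
    payoff R σ A u a π i = ((-tax R σ a π i + u i fun j => ahat R a j.1 : ℝ) : EReal) :=
  if_pos h

theorem payoff_of_not_mem (h : ahat R a i ∉ A i) : payoff R σ A u a π i = ⊥ :=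
  if_neg h

theorem IsNE.penalty_eq_zero (hne : IsNE R σ A u a π)
    (hσi : ∀ j ∈ R i, σ j i ≠ i ∧ σ j (σ j i) ≠ i) (hA : ahat R a i ∈ A i) :
    ∀ j ∈ R i, π i j * (a i j - a (σ j i) j) ^ 2 = 0 := by
  have hdev := hne.2 i (a i) 0 fun _ _ => le_rfl
  have hA' : ahat R (Function.update a i (a i)) i ∈ A i := by rwa [Function.update_eq_self]
  rw [payoff_of_mem hA', payoff_of_mem hA, EReal.coe_le_coe_iff, tax_update_self hσi,
    Function.update_eq_self, tax] at hdev
  have hnn : ∀ j ∈ R i, 0 ≤ π i j * (a i j - a (σ j i) j) ^ 2 :=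
    fun j hj => mul_nonneg (hne.1 i j hj) (sq_nonneg _)
  have hle : ∑ j ∈ R i, π i j * (a i j - a (σ j i) j) ^ 2 ≤ 0 := by
    simp only [Pi.zero_apply, zero_mul, add_zero, sum_sub_distrib, sum_add_distrib] at hdev
    linarith
  exact (sum_eq_zero_iff_of_nonneg hnn).1 (le_antisymm hle (sum_nonneg hnn))

theorem IsNE.isMaxOn_price (hne : IsNE R σ A u a π)
    (hσ : ∀ j, Set.MapsTo (σ j) (affected R j) (affected R j))
    (hσi : ∀ j ∈ R i, σ j i ≠ i ∧ σ j (σ j i) ≠ i) (hi : i ∈ R i) (hA : ahat R a i ∈ A i)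
    (hpen : ∀ k, ∀ j ∈ R k, π k j * (a k j - a (σ j k) j) ^ 2 = 0) :
    IsMaxOn (fun b => -((fun j : ↥(R i) => price σ π i j) ⬝ᵥ b) + u i b)
      {b | b ⟨i, hi⟩ ∈ A i} (fun j => ahat R a j) := by
  intro b hb
  obtain ⟨a', ha'⟩ := exists_ahat_update_eq a i b
  have hA' : ahat R (Function.update a i a') i ∈ A i := (ha' ⟨i, hi⟩).symm ▸ hb
  have hdev := hne.2 i a' 0 fun _ _ => le_rfl
  rw [payoff_of_mem hA', payoff_of_mem hA, EReal.coe_le_coe_iff, tax_update_self hσi,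
    tax_eq_sum_price hσ hpen, ← sum_coe_sort (R i), ← sum_coe_sort (R i)] at hdev
  have hD : ∀ j : ↥(R i), π (σ j i) j * (a (σ j i) j - a (σ j (σ j i)) j) ^ 2 = 0 :=
    fun j => hpen (σ j i) j (mem_affected.1 (hσ j (mem_affected.2 j.2)))
  simp only [ha', hD, Pi.zero_apply, zero_mul, add_zero, sub_zero] at hdev
  exact hdev

theorem IsNE.price_eq (hne : IsNE R σ A u a π) (hR : ∀ i, i ∈ R i)
    (hσ : ∀ j, Set.BijOn (σ j) (affected R j) (affected R j))
    (hσi : ∀ i, ∀ j ∈ R i, σ j i ≠ i ∧ σ j (σ j i) ≠ i) (hA : ∀ i, ahat R a i ∈ A i)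
    (hu : ∀ i, DifferentiableAt ℝ (u i) fun j => ahat R a j)
    (hpen : ∀ k, ∀ j ∈ R k, π k j * (a k j - a (σ j k) j) ^ 2 = 0)
    {l : N → N → ℝ} (hlsum : ∀ j, ∑ k ∈ affected R j, l k j = 0)
    (hl : ∀ i, IsMaxOn (fun b => -((fun j : ↥(R i) => l i j) ⬝ᵥ b) + u i b)
      {b | b ⟨i, hR i⟩ ∈ A i} (fun j => ahat R a j)) :
    ∀ i, ∀ j ∈ R i, price σ π i j = l i j := by
  have hoff : ∀ i, ∀ j ∈ R i, j ≠ i → price σ π i j = l i j := fun i j hj hji =>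
    apply_eq_of_isMaxOn_of_isMaxOn (j := ⟨j, hj⟩) (hu i) (hA i)
      (hne.isMaxOn_price (fun j => (hσ j).mapsTo) (hσi i) (hR i) (hA i) hpen) (hl i)
      (Subtype.coe_ne_coe.1 hji)
  intro i j hj
  rcases eq_or_ne j i with rfl | hji
  · exact (affected R j).eq_of_sum_eq_of_forall_ne (f := (price σ π · j)) (g := (l · j))
      (mem_affected.2 hj)
      ((sum_price_eq_zero (hσ j) π).trans (hlsum j).symm)
      fun k hk hkj => hoff k j (mem_affected.1 hk) hkj.symm
  · exact hoff i j hj hji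

theorem isNE_of_price_eq (hR : ∀ i, i ∈ R i)
    (hσ : ∀ j, Set.MapsTo (σ j) (affected R j) (affected R j))
    (hσi : ∀ i, ∀ j ∈ R i, σ j i ≠ i ∧ σ j (σ j i) ≠ i) (hA : ∀ i, ahat R a i ∈ A i)
    {l : N → N → ℝ}
    (hl : ∀ i, IsMaxOn (fun b => -((fun j : ↥(R i) => l i j) ⬝ᵥ b) + u i b)
      {b | b ⟨i, hR i⟩ ∈ A i} (fun j => ahat R a j))
    (hprice : ∀ i, ∀ j ∈ R i, price σ π i j = l i j)
    (hpen : ∀ k, ∀ j ∈ R k, π k j * (a k j - a (σ j k) j) ^ 2 = 0)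
    (hπ : ∀ i, ∀ j ∈ R i, 0 ≤ π i j) :
    IsNE R σ A u a π := by
  refine ⟨hπ, fun i a' π' hπ' => ?_⟩
  by_cases hA' : ahat R (Function.update a i a') i ∈ A i
  swap
  · rw [payoff_of_not_mem hA']
    exact bot_le
  rw [payoff_of_mem hA', payoff_of_mem (hA i), EReal.coe_le_coe_iff, tax_update_self (hσi i),
    tax_eq_sum_price hσ hpen]
  have hmax := isMaxOn_iff.1 (hl i) (fun j => ahat R (Function.update a i a') j) hA'
  have hcharge : ∑ j ∈ R i, l i j * ahat R (Function.update a i a') j ≤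
      ∑ j ∈ R i, (price σ π i j * ahat R (Function.update a i a') j
        + π' j * (a' j - a (σ j i) j) ^ 2
        - π (σ j i) j * (a (σ j i) j - a (σ j (σ j i)) j) ^ 2) := by
    refine sum_le_sum fun j hj => ?_
    rw [hprice i j hj, hpen (σ j i) j (mem_affected.1 (hσ j (mem_affected.2 hj)))]
    linarith [mul_nonneg (hπ' j hj) (sq_nonneg (a' j - a (σ j i) j))]
  have hsum_dev := sum_coe_sort (R i) fun j => l i j * ahat R (Function.update a i a') j
  have hsum_eq := sum_coe_sort (R i) fun j => l i j * ahat R a j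
  have hprice' : ∑ j ∈ R i, price σ π i j * ahat R a j = ∑ j ∈ R i, l i j * ahat R a j :=
    sum_congr rfl fun j hj => by rw [hprice i j hj]
  simp only [dotProduct] at hmax
  linarith

theorem isNE_and_tax_eq_iff (hR : ∀ i, i ∈ R i)
    (hσ : ∀ j, Set.BijOn (σ j) (affected R j) (affected R j))
    (hσi : ∀ i, ∀ j ∈ R i, σ j i ≠ i ∧ σ j (σ j i) ≠ i) (hu : ∀ i, Differentiable ℝ (u i))
    {x : N → ℝ} (hx : ∀ i, x i ∈ A i) {l : N → N → ℝ}
    (hlsum : ∀ j, ∑ k ∈ affected R j, l k j = 0)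
    (hl : ∀ i, IsMaxOn (fun b => -((fun j : ↥(R i) => l i j) ⬝ᵥ b) + u i b)
      {b | b ⟨i, hR i⟩ ∈ A i} (fun j => x j))
    (hax : ∀ j, ahat R a j = x j) :
    (IsNE R σ A u a π ∧ ∀ i, tax R σ a π i = ∑ j ∈ R i, l i j * x j) ↔
      (∀ i, ∀ j ∈ R i, price σ π i j = l i j) ∧
      (∀ i, ∀ j ∈ R i, π i j * (a i j - a (σ j i) j) ^ 2 = 0) ∧ (∀ i, ∀ j ∈ R i, 0 ≤ π i j) := by
  obtain rfl : (ahat R a ·) = x := funext hax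
  have hmaps j : Set.MapsTo (σ j) (affected R j) (affected R j) := (hσ j).mapsTo
  constructor
  · rintro ⟨hne, -⟩
    have hpen k := hne.penalty_eq_zero (hσi k) (hx k)
    exact ⟨hne.price_eq hR hσ hσi hx (fun i => (hu i).differentiableAt) hpen hlsum hl, hpen, hne.1⟩
  · rintro ⟨hprice, hpen, hπ⟩
    refine ⟨isNE_of_price_eq hR hmaps hσi hx hl hprice hpen hπ, fun i => ?_⟩
    rw [tax_eq_sum_price hmaps hpen]
    exact sum_congr rfl fun j hj => by rw [hprice i j hj]

end Mechanism

theorem NE_realizing_optimum_characterization_general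
    {N : Type*} [Fintype N] [DecidableEq N]
    (R : N → Finset N) (σ : N → N → N)
    (hR : ∀ i, i ∈ R i)
    (hC3 : ∀ j, 3 ≤ (affected R j).card)
    (hσ : ∀ j, Set.BijOn (σ j) ↑(affected R j) ↑(affected R j))
    (hcyc : ∀ j, ∀ x ∈ affected R j, ∀ y ∈ affected R j, ∃ n : ℕ, (σ j)^[n] x = y)
    (A : N → Set ℝ)
    (u : ∀ i : N, (↥(R i) → ℝ) → ℝ)
    (hdiff : ∀ i, Differentiable ℝ (u i))
    -- `a*` is a centralized optimum
    (astar : N → ℝ) (hfeas : ∀ i, astar i ∈ A i)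
    -- `l*` are supporting personalized prices for `a*`
    (l : N → N → ℝ)
    (hlsum : ∀ j : N, ∑ k ∈ affected R j, l k j = 0)
    (hmax : ∀ i : N, ∀ abar : ↥(R i) → ℝ, abar ⟨i, hR i⟩ ∈ A i →
      - (∑ j : ↥(R i), l i j.1 * abar j) + u i abar ≤
        - (∑ j : ↥(R i), l i j.1 * astar j.1) + u i (fun j => astar j.1)) :
    -- (1) there exists at least one NE realizing (a*, t*)
    (∃ a π : N → N → ℝ, IsNE R σ A u a π ∧
      (∀ j : N, ahat R a j = astar j) ∧
      (∀ i : N, tax R σ a π i = ∑ j ∈ R i, l i j * astar j)) ∧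
    -- (2) a message profile is a NE realizing (a*, t*) iff it satisfies (i)-(iv)
    (∀ a π : N → N → ℝ,
      (IsNE R σ A u a π ∧
        (∀ j : N, ahat R a j = astar j) ∧
        (∀ i : N, tax R σ a π i = ∑ j ∈ R i, l i j * astar j))
      ↔
      ((∀ j : N, (∑ k ∈ affected R j, a k j) / ((affected R j).card : ℝ) = astar j) ∧
       (∀ i : N, ∀ j ∈ R i, π (σ j i) j - π (σ j (σ j i)) j = l i j) ∧
       (∀ i : N, ∀ j ∈ R i, π i j * (a i j - a (σ j i) j) ^ 2 = 0) ∧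
       (∀ i : N, ∀ j ∈ R i, 0 ≤ π i j))) := by
  have hσi : ∀ i, ∀ j ∈ R i, σ j i ≠ i ∧ σ j (σ j i) ≠ i := fun i j hj =>
    apply_ne_self_of_cycle (hC3 j) (hcyc j) (mem_affected.2 hj)
  have key {a π : N → N → ℝ} (hah : ∀ j, ahat R a j = astar j) :=
    isNE_and_tax_eq_iff (π := π) hR hσ hσi hdiff hfeas hlsum (fun i => isMaxOn_iff.2 (hmax i)) hah
  choose p hp₀ hp using fun j => exists_nonneg_apply_sub_apply_apply_eq (hσ j) (hcyc j) (hlsum j)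
  have hah₀ (j : N) : ahat R (fun _ => astar) j = astar j :=
    ahat_const astar ⟨j, mem_affected.2 (hR j)⟩
  have h₀ := (key (π := fun k j => p j k) hah₀).2
    ⟨fun i j hj => hp j i (mem_affected.2 hj), by simp, fun i j _ => hp₀ j i⟩
  exact ⟨⟨_, _, h₀.1, hah₀, h₀.2⟩, fun a π =>
    ⟨fun ⟨hne, hah, htax⟩ => ⟨hah, (key hah).1 ⟨hne, htax⟩⟩,
      fun ⟨hah, h⟩ => ⟨((key hah).2 h).1, hah, ((key hah).2 h).2⟩⟩⟩

/-- Theorem 2(b): existence of a Nash equilibrium realizing a given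
centralized optimum `a*` with taxes `t*_i = Σ_{j∈R_i} l*_{ij}·a*_j`, and the
characterization of all such Nash equilibria by conditions (i)–(iv). -/
theorem NE_realizing_optimum_characterization
    {N : Type*} [Fintype N] [DecidableEq N]
    (R : N → Finset N) (σ : N → N → N)
    (hR : ∀ i, i ∈ R i)
    (hC3 : ∀ j, 3 ≤ (affected R j).card)
    (hσ : ∀ j, Set.BijOn (σ j) ↑(affected R j) ↑(affected R j))
    (hcyc : ∀ j, ∀ x ∈ affected R j, ∀ y ∈ affected R j, ∃ n : ℕ, (σ j)^[n] x = y)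
    (A : N → Set ℝ)
    (hA0 : ∀ i, (0 : ℝ) ∈ A i) (hAconv : ∀ i, Convex ℝ (A i)) (hAcomp : ∀ i, IsCompact (A i))
    (u : ∀ i : N, (↥(R i) → ℝ) → ℝ)
    (hu : ∀ i, ConcaveOn ℝ Set.univ (u i))
    (hdiff : ∀ i, Differentiable ℝ (u i))
    -- `a*` is a centralized optimum
    (astar : N → ℝ) (hfeas : ∀ i, astar i ∈ A i)
    (hopt : ∀ b : N → ℝ, (∀ i, b i ∈ A i) →
      ∑ i, u i (fun j => b j.1) ≤ ∑ i, u i (fun j => astar j.1))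
    -- `l*` are supporting personalized prices for `a*`
    (l : N → N → ℝ)
    (hlsum : ∀ j : N, ∑ k ∈ affected R j, l k j = 0)
    (hmax : ∀ i : N, ∀ abar : ↥(R i) → ℝ, abar ⟨i, hR i⟩ ∈ A i →
      - (∑ j : ↥(R i), l i j.1 * abar j) + u i abar ≤
        - (∑ j : ↥(R i), l i j.1 * astar j.1) + u i (fun j => astar j.1)) :
    -- (1) there exists at least one NE realizing (a*, t*)
    (∃ a π : N → N → ℝ, IsNE R σ A u a π ∧
      (∀ j : N, ahat R a j = astar j) ∧
      (∀ i : N, tax R σ a π i = ∑ j ∈ R i, l i j * astar j)) ∧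
    -- (2) a message profile is a NE realizing (a*, t*) iff it satisfies (i)-(iv)
    (∀ a π : N → N → ℝ,
      (IsNE R σ A u a π ∧
        (∀ j : N, ahat R a j = astar j) ∧
        (∀ i : N, tax R σ a π i = ∑ j ∈ R i, l i j * astar j))
      ↔
      ((∀ j : N, (∑ k ∈ affected R j, a k j) / ((affected R j).card : ℝ) = astar j) ∧
       (∀ i : N, ∀ j ∈ R i, π (σ j i) j - π (σ j (σ j i)) j = l i j) ∧
       (∀ i : N, ∀ j ∈ R i, π i j * (a i j - a (σ j i) j) ^ 2 = 0) ∧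
       (∀ i : N, ∀ j ∈ R i, 0 ≤ π i j))) :=
  NE_realizing_optimum_characterization_general R σ hR hC3 hσ hcyc A u hdiff astar hfeas l hlsum
    hmax
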